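/- arXiv:2501.15205 — 4 statements merged into one kernel-verified Lean document; each statement's English description precedes it below -/
import Mathlib

section
/- Let m be a positive natural number. Let Q be an invertible skew-symmetric real (2m)×(2m) matrix and let S be an invertible real (2m)×(2m) matrix with Sᵀ · Q · S = J. Let R be an invertible complex m×m matrix, let Z be a symmetric complex m×m matrix, and set T := R · (I_m | Z) · S⁻¹, a complex m×(2m) matrix, where (I_m | Z) is the m×(2m) matrix whose first m columns form the identity matrix and whose last m columns form Z, and where S and Q are regarded as complex matrices by coercing their entries. Then i · conj(T) · Q⁻¹ · Tᵀ = 2 · conj(R) · (Im Z) · Rᵀ. -/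
/-!
Since `Sᵀ Q S = J`, the middle factor of `conj(T) Q⁻¹ Tᵀ` is `S⁻¹ Q⁻¹ S⁻ᵀ = (Sᵀ Q S)⁻¹ = J⁻¹`,
and `S` is real, so conjugation does not touch it. What remains is
`conj(R) (1 | conj Z) J⁻¹ (1 | Z)ᵀ Rᵀ = conj(R) (conj Z - Z) Rᵀ`, using `Zᵀ = Z`,
and `i (conj z - z) = 2 Im z` entrywise.
-/

open Matrix

theorem Complex.I_mul_conj_sub_self (z : ℂ) : Complex.I * (starRingEnd ℂ z - z) = 2 * z.im := by
  rw [← neg_sub, Complex.sub_conj]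
  push_cast
  ring_nf
  simp [Complex.I_sq]

namespace Matrix

section CommRing

variable {n k α : Type*} [Fintype n] [DecidableEq n] [Fintype k] [DecidableEq k] [CommRing α]

theorem inv_fromBlocks_zero_one_neg_one_zero :
    (fromBlocks 0 1 (-1) 0 : Matrix (k ⊕ k) (k ⊕ k) α)⁻¹ = fromBlocks 0 (-1) 1 0 :=
  inv_eq_right_inv (by simp [fromBlocks_multiply, fromBlocks_one])

theorem nonsing_inv_mul_nonsing_inv_mul_transpose_nonsing_inv {A B C : Matrix n n α}
    (h : Aᵀ * B * A = C) : A⁻¹ * B⁻¹ * A⁻¹ᵀ = C⁻¹ := by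
  rw [← h, mul_inv_rev, mul_inv_rev, transpose_nonsing_inv, Matrix.mul_assoc]

theorem fromCols_one_mul_fromBlocks_mul_fromRows_one (W Z : Matrix k k α) :
    fromCols (1 : Matrix k k α) W * (fromBlocks 0 (-1) 1 0 : Matrix (k ⊕ k) (k ⊕ k) α) *
      fromRows (1 : Matrix k k α) Z = W - Z := by
  rw [fromCols_mul_fromBlocks, fromCols_mul_fromRows]
  simp [sub_eq_add_neg]

theorem map_starRingEnd_nonsing_inv [StarRing α] (A : Matrix n n α) :
    A⁻¹.map (starRingEnd α) = (A.map (starRingEnd α))⁻¹ := by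
  have h (B : Matrix n n α) : B.map (starRingEnd α) = Bᴴᵀ := rfl
  rw [h, h, conjTranspose_nonsing_inv, transpose_nonsing_inv]

theorem mul_fromCols_one_mul_inv_mul_inv_mul_transpose {Q S : Matrix (k ⊕ k) (k ⊕ k) α}
    (hSQS : Sᵀ * Q * S = fromBlocks 0 1 (-1) 0) (R' R W Z : Matrix k k α) (hZ : Zᵀ = Z) :
    R' * fromCols (1 : Matrix k k α) W * S⁻¹ * Q⁻¹ * (R * fromCols (1 : Matrix k k α) Z * S⁻¹)ᵀ =
      R' * (W - Z) * Rᵀ := by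
  have hJinv : S⁻¹ * Q⁻¹ * S⁻¹ᵀ = fromBlocks 0 (-1) 1 0 := by
    rw [nonsing_inv_mul_nonsing_inv_mul_transpose_nonsing_inv hSQS,
      inv_fromBlocks_zero_one_neg_one_zero]
  rw [transpose_mul, transpose_mul, transpose_fromCols, transpose_one, hZ,
    ← fromCols_one_mul_fromBlocks_mul_fromRows_one W Z, ← hJinv]
  simp only [Matrix.mul_assoc]

end CommRing

section Complex

variable {m n : Type*}

theorem smul_I_map_conj_sub_self (Z : Matrix m n ℂ) :
    Complex.I • (Z.map (starRingEnd ℂ) - Z) = (2 : ℂ) • Z.map (fun z => (z.im : ℂ)) := by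
  ext i j
  exact Complex.I_mul_conj_sub_self (Z i j)

theorem map_conj_map_ofReal (A : Matrix m n ℝ) :
    (A.map ((↑) : ℝ → ℂ)).map (starRingEnd ℂ) = A.map ((↑) : ℝ → ℂ) := by
  ext i j
  exact Complex.conj_ofReal _

theorem map_ofReal_transpose_mul_mul [Fintype n] (S Q : Matrix n n ℝ) :
    (S.map ((↑) : ℝ → ℂ))ᵀ * Q.map ((↑) : ℝ → ℂ) * S.map ((↑) : ℝ → ℂ) =
      (Sᵀ * Q * S).map ((↑) : ℝ → ℂ) := by
  change _ = (Sᵀ * Q * S).map Complex.ofRealHom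
  rw [Matrix.map_mul, Matrix.map_mul, transpose_map]
  rfl

end Complex

end Matrix

theorem conj_T_Qinv_Tt_eq_two_conj_R_ImZ_Rt_general
    (m : ℕ)
    (Q S : Matrix (Fin m ⊕ Fin m) (Fin m ⊕ Fin m) ℝ)
    (hSQS : Sᵀ * Q * S = Matrix.fromBlocks 0 1 (-1) 0)
    (R Z : Matrix (Fin m) (Fin m) ℂ)
    (hZ : Zᵀ = Z)
    (Qc Sc : Matrix (Fin m ⊕ Fin m) (Fin m ⊕ Fin m) ℂ)
    (hQc : Qc = Q.map (fun x : ℝ => (x : ℂ)))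
    (hSc : Sc = S.map (fun x : ℝ => (x : ℂ)))
    (T : Matrix (Fin m) (Fin m ⊕ Fin m) ℂ)
    (hT : T = R * Matrix.fromCols 1 Z * Sc⁻¹) :
    Complex.I • (T.map (starRingEnd ℂ) * Qc⁻¹ * Tᵀ)
      = (2 : ℂ) • (R.map (starRingEnd ℂ) * Z.map (fun z => (z.im : ℂ)) * Rᵀ) := by
  -- In `hT` the type of `1` is left open, so its products elaborate through `CStarMatrix`.
  replace hT : T = R * fromCols (1 : Matrix (Fin m) (Fin m) ℂ) Z * Sc⁻¹ := hT
  have hSQSc : Scᵀ * Qc * Sc = fromBlocks 0 1 (-1) 0 := by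
    rw [hQc, hSc, map_ofReal_transpose_mul_mul, hSQS]
    simp [fromBlocks_map, Matrix.map_neg]
  have hconjT : T.map (starRingEnd ℂ) =
      R.map (starRingEnd ℂ) * fromCols (1 : Matrix (Fin m) (Fin m) ℂ) (Z.map (starRingEnd ℂ)) *
        Sc⁻¹ := by
    rw [hT, Matrix.map_mul, Matrix.map_mul, map_starRingEnd_nonsing_inv, hSc, map_conj_map_ofReal,
      fromCols_map]
    simp
  rw [hconjT, hT, mul_fromCols_one_mul_inv_mul_inv_mul_transpose hSQSc _ _ _ _ hZ,
    ← Matrix.smul_mul, ← Matrix.mul_smul, smul_I_map_conj_sub_self, Matrix.mul_smul,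
    Matrix.smul_mul]

/-- The identity `i · conj(T) · Q⁻¹ · Tᵀ = 2 · conj(R) · (Im Z) · Rᵀ` from item (4) of the
lemma on constant polarizations, where `T = R · (I | Z) · S⁻¹` and `Sᵀ Q S = J`. -/
theorem conj_T_Qinv_Tt_eq_two_conj_R_ImZ_Rt
    (m : ℕ) (hm : 0 < m)
    (Q S : Matrix (Fin m ⊕ Fin m) (Fin m ⊕ Fin m) ℝ)
    (hQskew : Qᵀ = -Q) (hQ : IsUnit Q) (hS : IsUnit S)
    (hSQS : Sᵀ * Q * S = Matrix.fromBlocks 0 1 (-1) 0)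
    (R Z : Matrix (Fin m) (Fin m) ℂ)
    (hR : IsUnit R) (hZ : Zᵀ = Z)
    (Qc Sc : Matrix (Fin m ⊕ Fin m) (Fin m ⊕ Fin m) ℂ)
    (hQc : Qc = Q.map (fun x : ℝ => (x : ℂ)))
    (hSc : Sc = S.map (fun x : ℝ => (x : ℂ)))
    (T : Matrix (Fin m) (Fin m ⊕ Fin m) ℂ)
    (hT : T = R * Matrix.fromCols 1 Z * Sc⁻¹) :
    Complex.I • (T.map (starRingEnd ℂ) * Qc⁻¹ * Tᵀ)
      = (2 : ℂ) • (R.map (starRingEnd ℂ) * Z.map (fun z => (z.im : ℂ)) * Rᵀ) :=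
  conj_T_Qinv_Tt_eq_two_conj_R_ImZ_Rt_general m Q S hSQS R Z hZ Qc Sc hQc hSc T hT
end

section
/- Let m be a positive natural number and let Z be a symmetric complex m×m matrix whose entrywise imaginary part Im Z (a real m×m matrix) is invertible. Let Y denote the complex m×m matrix obtained from (Im Z)⁻¹ by coercing entries to ℂ. Define Π1 := −(i/2)·Y and Π2 := (i/2)·conj(Z)·Y, and let Π be the (2m)×m complex matrix obtained by stacking Π1 on top of Π2. Then Πᵀ · J · Π = 0 and Πᵀ · J · conj(Π) = −(i/2)·Y. -/
/-!
Since `Π₂ = -conj(Z) Π₁` and `conj Π₂ = -Z conj(Π₁)`, both `Π` and `conj Π` are graphs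
`(A; W A)` over their top blocks. On two graphs the form `Xᵀ J X'` collapses to
`Aᵀ (W' - Wᵀ) A'`. For `Π` against itself this is `Π₁ᵀ (conj Zᵀ - conj Z) Π₁ = 0`; against
`conj Π` it is `Π₁ᵀ (conj Z - Z) conj Π₁ = -2i · Π₁ᵀ (Im Z) conj Π₁`, and `Y (Im Z) Y = Y`
leaves `-(i/2) Y`.
-/

open Matrix

namespace Matrix

variable {n k l R : Type*} [Fintype n] [DecidableEq n] [CommRing R]

theorem fromRows_transpose_mul_J_mul_fromRows (A B : Matrix n k R) (C D : Matrix n l R) :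
    (fromRows A B)ᵀ * J n R * fromRows C D = Bᵀ * C - Aᵀ * D := by
  rw [J, transpose_fromRows, fromCols_mul_fromBlocks, fromCols_mul_fromRows]
  simp only [Matrix.mul_zero, Matrix.mul_one, Matrix.mul_neg, zero_add, add_zero]
  rw [Matrix.neg_mul, sub_eq_add_neg]

theorem fromRows_mul_transpose_mul_J_mul_fromRows_mul [Fintype k] (A : Matrix n k R)
    (B : Matrix n l R) (W W' : Matrix n n R) :
    (fromRows A (W * A))ᵀ * J n R * fromRows B (W' * B) = Aᵀ * (Wᵀ - W') * B := by
  rw [fromRows_transpose_mul_J_mul_fromRows, transpose_mul, Matrix.mul_sub, Matrix.sub_mul,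
    Matrix.mul_assoc, Matrix.mul_assoc]

theorem transpose_map_inv_mul_map_mul_map_inv {S : Type*} [CommRing S] (f : R →+* S)
    {M : Matrix n n R} (hM : Mᵀ = M) (hMu : IsUnit M) :
    (M⁻¹.map f)ᵀ * M.map f * M⁻¹.map f = M⁻¹.map f := by
  rw [← transpose_map, transpose_nonsing_inv, hM, ← Matrix.map_mul, ← Matrix.map_mul,
    Matrix.mul_assoc, mul_nonsing_inv _ ((isUnit_iff_isUnit_det M).mp hMu), Matrix.mul_one]

omit [Fintype n] [DecidableEq n] in
theorem sub_map_conj {m : Type*} (Z : Matrix n m ℂ) :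
    Z - Z.map (starRingEnd ℂ) = (2 * Complex.I) • (Z.map Complex.im).map Complex.ofReal := by
  ext i j
  simp only [sub_apply, map_apply, smul_apply, smul_eq_mul, Complex.sub_conj]
  push_cast
  ring

end Matrix

theorem pi_transpose_J_pi_general
    (m : ℕ)
    (Z : Matrix (Fin m) (Fin m) ℂ) (hZ : Zᵀ = Z)
    (ImZ : Matrix (Fin m) (Fin m) ℝ)
    (hImZ : ImZ = Matrix.of fun i j => (Z i j).im)
    (hImZinv : IsUnit ImZ)
    (Y : Matrix (Fin m) (Fin m) ℂ)
    (hY : Y = (ImZ⁻¹).map (fun x : ℝ => (x : ℂ)))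
    (P1 P2 : Matrix (Fin m) (Fin m) ℂ)
    (hP1 : P1 = (-(Complex.I / 2)) • Y)
    (hP2 : P2 = (Complex.I / 2) • (Z.map (starRingEnd ℂ) * Y))
    (P : Matrix (Fin m ⊕ Fin m) (Fin m) ℂ)
    (hP : P = Matrix.fromRows P1 P2)
    (J : Matrix (Fin m ⊕ Fin m) (Fin m ⊕ Fin m) ℂ)
    (hJ : J = Matrix.fromBlocks 0 1 (-1) 0) :
    Pᵀ * J * P = 0 ∧ Pᵀ * J * P.map (starRingEnd ℂ) = (-(Complex.I / 2)) • Y := by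
  have hJ' : J = -Matrix.J (Fin m) ℂ := by
    rw [hJ, Matrix.J, fromBlocks_neg, neg_zero, neg_neg]
  have hZbar : (Z.map (starRingEnd ℂ))ᵀ = Z.map (starRingEnd ℂ) := by rw [← transpose_map, hZ]
  have hImZ_map : Z.map Complex.im = ImZ := hImZ.symm
  have hImZ_symm : ImZᵀ = ImZ := by rw [← hImZ_map, ← transpose_map, hZ]
  have hP2 : P2 = -Z.map (starRingEnd ℂ) * P1 := by
    rw [hP2, hP1, Matrix.mul_smul, Matrix.neg_mul, neg_smul_neg]
  have hP1_conj : P1.map (starRingEnd ℂ) = (Complex.I / 2) • Y := by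
    ext i j; simp [hP1, hY, div_eq_mul_inv, map_ofNat]
  have hP_conj : P.map (starRingEnd ℂ) =
      fromRows (P1.map (starRingEnd ℂ)) (-Z * P1.map (starRingEnd ℂ)) := by
    rw [hP, fromRows_map, hP2, Matrix.neg_mul, Matrix.neg_mul, Matrix.map_neg _ (map_neg _),
      Matrix.map_mul, Matrix.map_map]
    simp only [Function.comp_def, Complex.conj_conj, Matrix.map_id']
  have hY_form : Yᵀ * ImZ.map Complex.ofReal * Y = Y :=
    hY ▸ transpose_map_inv_mul_map_mul_map_inv Complex.ofRealHom hImZ_symm hImZinv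
  constructor
  · rw [hP, hJ', hP2, Matrix.mul_neg, Matrix.neg_mul,
      fromRows_mul_transpose_mul_J_mul_fromRows_mul, transpose_neg, hZbar, sub_self,
      Matrix.mul_zero, Matrix.zero_mul, neg_zero]
  · rw [hP_conj, hP, hJ', hP2, Matrix.mul_neg, Matrix.neg_mul,
      fromRows_mul_transpose_mul_J_mul_fromRows_mul, transpose_neg, hZbar, sub_neg_eq_add,
      neg_add_eq_sub, sub_map_conj, hImZ_map, hP1_conj, hP1]
    simp only [transpose_smul, Matrix.smul_mul, Matrix.mul_smul, smul_smul, hY_form, ← neg_smul]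
    congr 1
    linear_combination (Complex.I / 2) * Complex.I_sq

/-- The identities `Πᵀ · J · Π = 0` and `Πᵀ · J · conj(Π) = −(i/2)·(Im Z)⁻¹` from the proof of
item (4) of the lemma on constant polarizations, where `Π = (Π₁; Π₂)` with
`Π₁ = −(i/2)(Im Z)⁻¹` and `Π₂ = (i/2)·conj(Z)·(Im Z)⁻¹`. -/
theorem pi_transpose_J_pi
    (m : ℕ) (hm : 0 < m)
    (Z : Matrix (Fin m) (Fin m) ℂ) (hZ : Zᵀ = Z)
    (ImZ : Matrix (Fin m) (Fin m) ℝ)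
    (hImZ : ImZ = Matrix.of fun i j => (Z i j).im)
    (hImZinv : IsUnit ImZ)
    (Y : Matrix (Fin m) (Fin m) ℂ)
    (hY : Y = (ImZ⁻¹).map (fun x : ℝ => (x : ℂ)))
    (P1 P2 : Matrix (Fin m) (Fin m) ℂ)
    (hP1 : P1 = (-(Complex.I / 2)) • Y)
    (hP2 : P2 = (Complex.I / 2) • (Z.map (starRingEnd ℂ) * Y))
    (P : Matrix (Fin m ⊕ Fin m) (Fin m) ℂ)
    (hP : P = Matrix.fromRows P1 P2)
    (J : Matrix (Fin m ⊕ Fin m) (Fin m ⊕ Fin m) ℂ)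
    (hJ : J = Matrix.fromBlocks 0 1 (-1) 0) :
    Pᵀ * J * P = 0 ∧ Pᵀ * J * P.map (starRingEnd ℂ) = (-(Complex.I / 2)) • Y :=
  pi_transpose_J_pi_general m Z hZ ImZ hImZ hImZinv Y hY P1 P2 hP1 hP2 P hP J hJ
end

section
/- Let ζ := exp(2πi/3) and let σ be the ℂ-algebra automorphism of the polynomial ring ℂ[s, w1, w2] in three variables determined by σ(s) = ζ²·s, σ(w1) = ζ·w1, σ(w2) = ζ·w2. Then the invariant subalgebra { f ∈ ℂ[s,w1,w2] : σ(f) = f } equals the ℂ-subalgebra of ℂ[s,w1,w2] generated by the seven elements s³, w1³, w2³, s·w1, s·w2, w1²·w2, w1·w2². -/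
/-!
The automorphism acts diagonally on monomials, `s^a w1^b w2^c ↦ ζ^(2a+b+c) s^a w1^b w2^c`, so
a polynomial is invariant iff every monomial in its support has `2a + b + c ≡ 0 (mod 3)`.
Every nonzero exponent vector with this property dominates the exponent vector of one of the
seven generators, and the difference again has the property; induction on the degree writes
each invariant monomial as a product of generators.
-/

open MvPolynomial Finsupp

namespace MvPolynomial

section Scaling

variable {R ι : Type*} [CommSemiring R] {φ : MvPolynomial ι R →ₐ[R] MvPolynomial ι R} {ζ : R}
  {w : ι → ℕ}

theorem map_monomial_of_map_X (hφ : ∀ i, φ (X i) = C (ζ ^ w i) * X i) (d : ι →₀ ℕ) (c : R) :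
    φ (monomial d c) = C (ζ ^ weight w d) * monomial d c := by
  induction d using Finsupp.induction with
  | zero =>
    rw [monomial_zero', map_zero, pow_zero, C_1, one_mul]
    exact φ.commutes c
  | single_add i e d _ _ ih =>
    rw [monomial_single_add, map_mul, map_pow, hφ, ih, mul_pow, ← C_pow, ← pow_mul, map_add,
      weight_single, smul_eq_mul, mul_comm e, pow_add, C_mul]
    ring

theorem coeff_map_of_map_X (hφ : ∀ i, φ (X i) = C (ζ ^ w i) * X i) (f : MvPolynomial ι R)
    (d : ι →₀ ℕ) : coeff d (φ f) = ζ ^ weight w d * coeff d f := by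
  induction f using induction_on' with
  | monomial e c =>
    classical
    rw [map_monomial_of_map_X hφ, coeff_C_mul, coeff_monomial]
    split_ifs with h
    · rw [h]
    · rw [mul_zero, mul_zero]
  | add p q hp hq => rw [map_add, coeff_add, coeff_add, hp, hq, mul_add]

end Scaling

theorem map_eq_self_iff_of_map_X {R ι : Type*} [CommRing R] [IsDomain R]
    {φ : MvPolynomial ι R →ₐ[R] MvPolynomial ι R} {ζ : R} {w : ι → ℕ} {n : ℕ}
    (hζ : IsPrimitiveRoot ζ n) (hφ : ∀ i, φ (X i) = C (ζ ^ w i) * X i) (f : MvPolynomial ι R) :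
    φ f = f ↔ ∀ d ∈ f.support, n ∣ weight w d := by
  simp only [MvPolynomial.ext_iff, coeff_map_of_map_X hφ, mem_support_iff, ← hζ.pow_eq_one_iff_dvd]
  refine forall_congr' fun d => ?_
  rw [← sub_eq_zero, ← sub_one_mul, mul_eq_zero, sub_eq_zero]
  tauto

theorem mem_of_forall_monomial_one_mem {R ι : Type*} [CommSemiring R]
    {A : Subalgebra R (MvPolynomial ι R)} {f : MvPolynomial ι R}
    (h : ∀ d ∈ f.support, monomial d 1 ∈ A) : f ∈ A := by
  rw [f.as_sum]
  refine A.sum_mem fun d hd => ?_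
  rw [← mul_one (coeff d f), ← smul_eq_mul, ← smul_monomial]
  exact A.smul_mem (h d hd) _

end MvPolynomial

section Weights211

variable {R : Type*} [CommSemiring R]

theorem monomial_one_fin_three (d : Fin 3 →₀ ℕ) :
    (monomial d 1 : MvPolynomial (Fin 3) R) = X 0 ^ d 0 * X 1 ^ d 1 * X 2 ^ d 2 := by
  rw [monomial_eq, C_1, one_mul, Finsupp.prod_fintype _ _ fun _ => pow_zero _, Fin.prod_univ_three]

theorem weight_two_one_one (d : Fin 3 →₀ ℕ) : weight ![2, 1, 1] d = 2 * d 0 + d 1 + d 2 := by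
  simp [weight_eq_sum, Fin.sum_univ_three, mul_comm]

def invariantGenerators211 : Set (MvPolynomial (Fin 3) R) :=
  {X 0 ^ 3, X 1 ^ 3, X 2 ^ 3, X 0 * X 1, X 0 * X 2, X 1 ^ 2 * X 2, X 1 * X 2 ^ 2}

theorem X_pow_mul_mem_adjoin_invariantGenerators211 {a b c : ℕ}
    (h : 3 ∣ 2 * a + b + c) :
    (X 0 ^ a * X 1 ^ b * X 2 ^ c : MvPolynomial (Fin 3) R) ∈
      Algebra.adjoin R invariantGenerators211 := by
  set A := Algebra.adjoin R (invariantGenerators211 : Set (MvPolynomial (Fin 3) R))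
  induction hn : a + b + c using Nat.strong_induction_on generalizing a b c with
  | _ n ih =>
  have gen : ∀ i j k, (X 0 ^ i * X 1 ^ j * X 2 ^ k : MvPolynomial (Fin 3) R) ∈
      invariantGenerators211 → X 0 ^ i * X 1 ^ j * X 2 ^ k ∈ A :=
    fun _ _ _ hg => Algebra.subset_adjoin hg
  have peel : ∀ i j k, i ≤ a ∧ j ≤ b ∧ k ≤ c ∧ 0 < i + j + k ∧ 3 ∣ 2 * i + j + k →
      (X 0 ^ i * X 1 ^ j * X 2 ^ k : MvPolynomial (Fin 3) R) ∈ invariantGenerators211 →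
      (X 0 ^ a * X 1 ^ b * X 2 ^ c : MvPolynomial (Fin 3) R) ∈ A := by
    intro i j k ⟨hi, hj, hk, _, _⟩ hg
    have hsplit : (X 0 ^ a * X 1 ^ b * X 2 ^ c : MvPolynomial (Fin 3) R) =
        X 0 ^ i * X 1 ^ j * X 2 ^ k * (X 0 ^ (a - i) * X 1 ^ (b - j) * X 2 ^ (c - k)) := by
      rw [← pow_mul_pow_sub (X 0) hi, ← pow_mul_pow_sub (X 1) hj, ← pow_mul_pow_sub (X 2) hk]
      ring
    rw [hsplit]
    exact A.mul_mem (gen i j k hg) (ih _ (by omega) (by omega) rfl)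
  obtain _ | _ | _ | _ | _ | ⟨rfl, hbc⟩ :
      3 ≤ a ∨ 3 ≤ b ∨ 3 ≤ c ∨ (1 ≤ a ∧ 1 ≤ b) ∨ (1 ≤ a ∧ 1 ≤ c) ∨
        (a = 0 ∧ (b = 0 ∧ c = 0 ∨ b = 1 ∧ c = 2 ∨ b = 2 ∧ c = 1)) := by omega
  · exact peel 3 0 0 (by omega) (by simp [invariantGenerators211])
  · exact peel 0 3 0 (by omega) (by simp [invariantGenerators211])
  · exact peel 0 0 3 (by omega) (by simp [invariantGenerators211])
  · exact peel 1 1 0 (by omega) (by simp [invariantGenerators211])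
  · exact peel 1 0 1 (by omega) (by simp [invariantGenerators211])
  · obtain ⟨rfl, rfl⟩ | ⟨rfl, rfl⟩ | ⟨rfl, rfl⟩ := hbc
    · simp
    · exact gen 0 1 2 (by simp [invariantGenerators211])
    · exact gen 0 2 1 (by simp [invariantGenerators211])

theorem map_X_pow_mul_X_pow_mul_X_pow
    {φ : MvPolynomial (Fin 3) R →ₐ[R] MvPolynomial (Fin 3) R} {ζ : R}
    (hφ : ∀ i, φ (X i) = C (ζ ^ ![2, 1, 1] i) * X i) (a b c : ℕ) :
    φ (X 0 ^ a * X 1 ^ b * X 2 ^ c) = C (ζ ^ (2 * a + b + c)) * (X 0 ^ a * X 1 ^ b * X 2 ^ c) := by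
  simp only [map_mul, map_pow, hφ, Matrix.cons_val_zero, Matrix.cons_val_one, Matrix.cons_val,
    pow_one]
  ring

theorem map_eq_self_of_mem_invariantGenerators211
    {φ : MvPolynomial (Fin 3) R →ₐ[R] MvPolynomial (Fin 3) R} {ζ : R} (hζ : ζ ^ 3 = 1)
    (hφ : ∀ i, φ (X i) = C (ζ ^ ![2, 1, 1] i) * X i) {x : MvPolynomial (Fin 3) R}
    (hx : x ∈ invariantGenerators211) : φ x = x := by
  have fixed : ∀ a b c, 3 ∣ 2 * a + b + c →
      φ (X 0 ^ a * X 1 ^ b * X 2 ^ c) = X 0 ^ a * X 1 ^ b * X 2 ^ c := by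
    rintro a b c ⟨k, hk⟩
    rw [map_X_pow_mul_X_pow_mul_X_pow hφ, hk, pow_mul, hζ, one_pow, C_1, one_mul]
  rcases hx with rfl | rfl | rfl | rfl | rfl | rfl | rfl
  · simpa using fixed 3 0 0 (by norm_num)
  · simpa using fixed 0 3 0 (by norm_num)
  · simpa using fixed 0 0 3 (by norm_num)
  · simpa using fixed 1 1 0 (by norm_num)
  · simpa using fixed 1 0 1 (by norm_num)
  · simpa using fixed 0 2 1 (by norm_num)
  · simpa using fixed 0 1 2 (by norm_num)

end Weights211

/-- The invariant ring `ℂ[s,w1,w2]^{ℤ3}` for the action by scaling with weights `(2,1,1)`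
(with `ζ = exp(2πi/3)`) is generated by `s³, w1³, w2³, s·w1, s·w2, w1²·w2, w1·w2²`.
Here the variables `s, w1, w2` are `X 0, X 1, X 2` in `MvPolynomial (Fin 3) ℂ`. -/
theorem invariant_ring_Z3_weights_211
    (ζ : ℂ) (hζ : ζ = Complex.exp (2 * (Real.pi : ℂ) * Complex.I / 3))
    (σ : MvPolynomial (Fin 3) ℂ ≃ₐ[ℂ] MvPolynomial (Fin 3) ℂ)
    (hs : σ (X 0) = C (ζ ^ 2) * X 0)
    (hw1 : σ (X 1) = C ζ * X 1)
    (hw2 : σ (X 2) = C ζ * X 2) :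
    {f : MvPolynomial (Fin 3) ℂ | σ f = f}
      = ↑(Algebra.adjoin ℂ
          ({X 0 ^ 3, X 1 ^ 3, X 2 ^ 3, X 0 * X 1, X 0 * X 2,
            X 1 ^ 2 * X 2, X 1 * X 2 ^ 2} : Set (MvPolynomial (Fin 3) ℂ))) := by
  have hprim : IsPrimitiveRoot ζ 3 := by
    simpa [hζ, mul_div_assoc] using Complex.isPrimitiveRoot_exp 3 three_ne_zero
  have hσ : ∀ i, σ.toAlgHom (X i) = C (ζ ^ ![2, 1, 1] i) * X i := by
    intro i
    fin_cases i <;> simp [hs, hw1, hw2]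
  ext f
  constructor
  · intro hf
    refine mem_of_forall_monomial_one_mem fun d hd => ?_
    have hdvd := (map_eq_self_iff_of_map_X hprim hσ f).1 hf d hd
    rw [weight_two_one_one] at hdvd
    rw [monomial_one_fin_three]
    exact X_pow_mul_mem_adjoin_invariantGenerators211 hdvd
  · intro hf
    have hle : Algebra.adjoin ℂ invariantGenerators211 ≤ σ.toAlgHom.equalizer (AlgHom.id ℂ _) :=
      Algebra.adjoin_le fun x hx => map_eq_self_of_mem_invariantGenerators211 hprim.pow_eq_one hσ hx
    simpa using hle hf
end

section
/- Let a > 0 be a real number and let ζ := exp(2πi/3). Define f_a on (0,∞) with values in ℂ by f_a(u) = (a³+u³)^{1/3} + (a/3)·Σ_{j=0}^{2} ζʲ·Log( (1+u³/a³)^{1/3} − ζʲ ), where (·)^{1/3} denotes the real cube root of a positive real number and Log denotes the principal branch of the complex logarithm. Then for every u > 0, f_a is differentiable at u with derivative f_a'(u) = (1 + a³/u³)^{1/3}, a positive real number. -/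
/-!
Write `v = (1 + u³/a³)^{1/3}`, so that `f_a(u) = a v + (a/3) Σ ζʲ Log(v − ζʲ)`. Since `v > 1` and
`|ζʲ| = 1`, every `v − ζʲ` has positive real part, so the logarithms are differentiable there, and
the partial-fraction identity `Σ ζʲ/(v − ζʲ) = 3/(v³ − 1)` gives `f_a' = a v' (1 + 1/(v³ − 1))`.
With `3 v² v' = 3u²/a³` and `v³ − 1 = u³/a³` this is `a v/u = (1 + a³/u³)^{1/3}`.
-/

open Finset Complex

theorem IsPrimitiveRoot.sum_pow_div_sub_pow_eq_three_div {K : Type*} [Field K] {ζ : K}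
    (hζ : IsPrimitiveRoot ζ 3) {v : K} (hv : v ^ 3 ≠ 1) :
    ∑ j ∈ range 3, ζ ^ j / (v - ζ ^ j) = 3 / (v ^ 3 - 1) := by
  have hcube := hζ.pow_eq_one
  have hsum : 1 + ζ + ζ ^ 2 = 0 := by
    simpa [sum_range_succ] using hζ.geom_sum_eq_zero (by norm_num)
  have hfactor : v ^ 3 - 1 = (v - 1) * (v - ζ) * (v - ζ ^ 2) := by
    linear_combination (v ^ 2 - ζ * v) * hsum + hcube
  have hne : (v - 1) * (v - ζ) * (v - ζ ^ 2) ≠ 0 := hfactor ▸ sub_ne_zero.2 hv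
  simp only [mul_ne_zero_iff] at hne
  obtain ⟨⟨h1, hζ1⟩, hζ2⟩ := hne
  rw [hfactor]
  simp only [sum_range_succ, sum_range_zero, pow_zero, pow_one]
  field_simp
  linear_combination (v ^ 2 - 2 * ζ * v) * hsum + 3 * hcube

theorem Complex.ofReal_sub_mem_slitPlane {x : ℝ} (hx : 1 < x) {w : ℂ} (hw : ‖w‖ ≤ 1) :
    (x : ℂ) - w ∈ slitPlane :=
  mem_slitPlane_iff.2 <| Or.inl <| by
    simpa using (re_le_norm w).trans_lt (hw.trans_lt hx)

theorem Real.rpow_one_third_pow_three {x : ℝ} (hx : 0 ≤ x) : (x ^ (1 / 3 : ℝ)) ^ 3 = x := by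
  simpa using Real.rpow_inv_natCast_pow (n := 3) hx (by norm_num)

theorem Real.pow_three_mul_rpow_one_third {c y : ℝ} (hc : 0 ≤ c) (hy : 0 ≤ y) :
    (c ^ 3 * y) ^ (1 / 3 : ℝ) = c * y ^ (1 / 3 : ℝ) := by
  rw [Real.mul_rpow (by positivity) hy, ← Real.rpow_natCast, ← Real.rpow_mul hc]
  norm_num

theorem HasDerivAt.rpow_one_third {h : ℝ → ℝ} {h' x : ℝ} (hh : HasDerivAt h h' x)
    (hx : 0 < h x) :
    HasDerivAt (fun t => h t ^ (1 / 3 : ℝ)) (h' / (3 * (h x ^ (1 / 3 : ℝ)) ^ 2)) x := by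
  convert hh.rpow_const (p := 1 / 3) (Or.inl hx.ne') using 1
  rw [← Real.rpow_natCast, ← Real.rpow_mul hx.le,
    show (1 / 3 : ℝ) - 1 = -(1 / 3 * (2 : ℕ)) by norm_num, Real.rpow_neg hx.le]
  field_simp

theorem HasDerivAt.sum_pow_mul_log_ofReal_sub_pow {g : ℝ → ℝ} {g' x : ℝ} (hg : HasDerivAt g g' x)
    {ζ : ℂ} (hζ : IsPrimitiveRoot ζ 3) (hx : 1 < g x) :
    HasDerivAt (fun t => ∑ j ∈ range 3, ζ ^ j * Complex.log ((g t : ℂ) - ζ ^ j))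
      ((3 * g' / (g x ^ 3 - 1) : ℝ) : ℂ) x := by
  have hterm (j : ℕ) : HasDerivAt (fun t => ζ ^ j * Complex.log ((g t : ℂ) - ζ ^ j))
      (ζ ^ j * (g' / (g x - ζ ^ j))) x :=
    ((hg.ofReal_comp.sub_const _).clog_real (ofReal_sub_mem_slitPlane hx
      (by rw [norm_pow, hζ.norm'_eq_one (by norm_num), one_pow]))).const_mul _
  refine (HasDerivAt.fun_sum fun j _ => hterm j).congr_deriv ?_
  have hx3 : (g x : ℂ) ^ 3 ≠ 1 := by exact_mod_cast (one_lt_pow₀ hx (by norm_num)).ne'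
  push_cast
  rw [mul_comm (3 : ℂ), mul_div_assoc, ← hζ.sum_pow_div_sub_pow_eq_three_div hx3, mul_sum]
  exact sum_congr rfl fun j _ => by ring

theorem eguchi_hanson_deriv_identity {a u v : ℝ} (ha : a ≠ 0) (hu : u ≠ 0) (hv : v ≠ 0)
    (hv3 : v ^ 3 = 1 + u ^ 3 / a ^ 3) :
    3 * u ^ 2 / (3 * (a * v) ^ 2) + a / 3 * (3 * (3 * u ^ 2 / a ^ 3 / (3 * v ^ 2)) / (v ^ 3 - 1))
      = a / u * v := by
  have hcube : a ^ 3 * v ^ 3 = a ^ 3 + u ^ 3 := by rw [hv3]; field_simp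
  rw [hv3]
  field_simp
  linear_combination -u ^ 3 * hcube

/-- The global Kähler potential
`f_a(u) = (a³+u³)^{1/3} + (a/3)·Σ_{j=0}^{2} ζʲ·Log((1+u³/a³)^{1/3} − ζʲ)` of the generalized
Eguchi–Hanson metric satisfies `f_a'(u) = (1 + a³/u³)^{1/3}` for every `u > 0`, and this
derivative is a positive real number. Here `ζ = exp(2πi/3)`, `(·)^{1/3}` is the real cube
root of a positive real, and `Log` is the principal branch of the complex logarithm. -/
theorem eguchi_hanson_potential_deriv
    (a : ℝ) (ha : 0 < a)
    (ζ : ℂ) (hζ : ζ = Complex.exp (2 * (Real.pi : ℂ) * Complex.I / 3))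
    (f : ℝ → ℂ)
    (hf : ∀ u : ℝ,
      f u = (((a ^ 3 + u ^ 3) ^ ((1 : ℝ) / 3) : ℝ) : ℂ)
        + ((a : ℂ) / 3) * ∑ j ∈ Finset.range 3,
            ζ ^ j * Complex.log ((((1 + u ^ 3 / a ^ 3) ^ ((1 : ℝ) / 3) : ℝ) : ℂ) - ζ ^ j)) :
    ∀ u : ℝ, 0 < u →
      HasDerivAt f (((1 + a ^ 3 / u ^ 3) ^ ((1 : ℝ) / 3) : ℝ) : ℂ) u ∧
        0 < (1 + a ^ 3 / u ^ 3) ^ ((1 : ℝ) / 3) := by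
  intro u hu
  have hprim : IsPrimitiveRoot ζ 3 :=
    hζ ▸ by exact_mod_cast Complex.isPrimitiveRoot_exp 3 (by norm_num)
  set v := (1 + u ^ 3 / a ^ 3) ^ (1 / 3 : ℝ)
  have hv3 : v ^ 3 = 1 + u ^ 3 / a ^ 3 := Real.rpow_one_third_pow_three (by positivity)
  have hv1 : 1 < v := Real.one_lt_rpow (lt_add_of_pos_right 1 (by positivity)) (by norm_num)
  have hroot : (a ^ 3 + u ^ 3) ^ (1 / 3 : ℝ) = a * v := by
    rw [← Real.pow_three_mul_rpow_one_third ha.le (by positivity)]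
    field_simp
  have htarget : (1 + a ^ 3 / u ^ 3) ^ (1 / 3 : ℝ) = a / u * v := by
    rw [← Real.pow_three_mul_rpow_one_third (by positivity) (by positivity)]
    congr 1
    field_simp
    ring
  have hv' : HasDerivAt (fun t => (1 + t ^ 3 / a ^ 3) ^ (1 / 3 : ℝ))
      (3 * u ^ 2 / a ^ 3 / (3 * v ^ 2)) u :=
    (((hasDerivAt_pow 3 u).div_const (a ^ 3)).const_add 1).rpow_one_third (by positivity)
  have hroot' : HasDerivAt (fun t => (a ^ 3 + t ^ 3) ^ (1 / 3 : ℝ))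
      (3 * u ^ 2 / (3 * (a * v) ^ 2)) u := by
    rw [← hroot]
    exact ((hasDerivAt_pow 3 u).const_add (a ^ 3)).rpow_one_third (by positivity)
  refine ⟨?_, by positivity⟩
  rw [show f = _ from funext hf]
  refine (hroot'.ofReal_comp.add ((hv'.sum_pow_mul_log_ofReal_sub_pow hprim hv1).const_mul
    ((a : ℂ) / 3))).congr_deriv ?_
  rw [htarget]
  exact_mod_cast eguchi_hanson_deriv_identity ha.ne' hu.ne' (by positivity) hv3
end
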